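/- arXiv:1306.2927 — 12 statements merged into one kernel-verified Lean document; each statement's English description precedes it below -/
import Mathlib

section
/- Let n ≥ 1, let P be an invertible n×n complex matrix, let λ_1,…,λ_n be nonzero complex numbers, let Λ = diag(λ_1,…,λ_n), let M = PΛP^{−1}, and let n_1,…,n_n be integers. Set T = Σ_{a,b=1}^{n} E_{ab} ⊗ M^{n_a−n_b}, T₁₂ = T ⊗ I_n and T₂₃ = I_n ⊗ T. Then T₁₂·T₂₃·T₁₂ = n·T₁₂ holds if and only if for all i, j, u ∈ {1,…,n}: (Σ_{r=1}^{n} (λ_j/λ_i)^{n_r}) · (Σ_{k,l=1}^{n} (P^{−1})_{ik} P_{lj} λ_u^{n_k−n_l}) = n·δ_{ij}. -/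
/-!
Conjugate everything by `R = 1 ⊗ P ⊗ P`. Since `T` for `M = P Λ P⁻¹` is `(1 ⊗ P) T_Λ (1 ⊗ P)⁻¹`,
where `T_Λ` (the same construction for `Λ`) is diagonal in its second leg with entries
`λ_i ^ (n_a - n_b)`, `R⁻¹ T₁₂ R` is `T_Λ ⊗ 1` and `R⁻¹ T₂₃ R` is `1 ⊗ S` with
`S = (P⁻¹ ⊗ 1) T_Λ (P ⊗ 1)`, which is diagonal in its last leg `u` with blocks
`P⁻¹ (λ_u ^ (n_k - n_l))_{kl} P`. Multiplying out, the `((a,i,u),(b,j,u))` entry of the conjugated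
triple product is `λ_i ^ n_a λ_j ^ (-n_b)` times the left-hand side of the condition, while that
of `n T₁₂` is `λ_i ^ n_a λ_j ^ (-n_b) n δ_ij`; all other entries vanish on both sides.
-/

open Matrix Kronecker

variable {ι K : Type*} [Fintype ι] [DecidableEq ι] [Field K]

theorem Matrix.diagonal_zpow {v : ι → K} (hv : ∀ i, v i ≠ 0) (m : ℤ) :
    diagonal v ^ m = diagonal fun i => v i ^ m := by
  cases m with
  | ofNat k => simp [diagonal_pow]
  | negSucc k =>
    have hu : IsUnit (v ^ (k + 1)) := Pi.isUnit_iff.mpr fun i => (pow_ne_zero _ (hv i)).isUnit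
    rw [zpow_negSucc, diagonal_pow, inv_diagonal]
    congr 1
    rw [← mul_one (Ring.inverse (v ^ (k + 1))), Ring.inverse_mul_eq_iff_eq_mul _ _ _ hu]
    funext i
    simp [zpow_negSucc, hv]

theorem Matrix.zpow_conj {P A : Matrix ι ι K} (hP : IsUnit P) (hA : IsUnit A.det) (m : ℤ) :
    (P * A * P⁻¹) ^ m = P * A ^ m * P⁻¹ := by
  have hPd : IsUnit P.det := (isUnit_iff_isUnit_det P).mp hP
  have h : SemiconjBy P A (P * A * P⁻¹) := by
    simp [SemiconjBy, Matrix.mul_assoc, nonsing_inv_mul _ hPd]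
  have hconj : IsUnit (P * A * P⁻¹).det := by
    simpa only [det_mul] using (hPd.mul hA).mul (isUnit_nonsing_inv_det P hPd)
  rw [(Matrix.SemiconjBy.zpow_right hA hconj h m).eq, Matrix.mul_assoc _ P,
    mul_nonsing_inv _ hPd, Matrix.mul_one]

theorem SemiconjBy.kronecker {l m : Type*} [Fintype l] [Fintype m]
    {a x y : Matrix l l K} {b z w : Matrix m m K}
    (h₁ : SemiconjBy a x y) (h₂ : SemiconjBy b z w) :
    SemiconjBy (a ⊗ₖ b) (x ⊗ₖ z) (y ⊗ₖ w) := by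
  rw [SemiconjBy, ← mul_kronecker_mul, ← mul_kronecker_mul, h₁.eq, h₂.eq]

theorem IsUnit.kronecker {l m : Type*} [Fintype l] [Fintype m] [DecidableEq l] [DecidableEq m]
    {A : Matrix l l K} {B : Matrix m m K} (hA : IsUnit A) (hB : IsUnit B) : IsUnit (A ⊗ₖ B) := by
  rw [isUnit_iff_isUnit_det] at hA hB ⊢
  rw [det_kronecker]
  exact (hA.pow _).mul (hB.pow _)

theorem SemiconjBy.eq_iff_of_isUnit {M : Type*} [Monoid M] {a x x' y y' : M} (ha : IsUnit a)
    (hx : SemiconjBy a x' x) (hy : SemiconjBy a y' y) : x = y ↔ x' = y' := by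
  rw [← ha.mul_left_inj, ← hx.eq, ← hy.eq, ha.mul_right_inj]

noncomputable def tlMatrix (M : Matrix ι ι K) (e : ι → ℤ) : Matrix (ι × ι) (ι × ι) K :=
  ∑ a, ∑ b, single a b 1 ⊗ₖ (M ^ (e a - e b))

theorem semiconjBy_tlMatrix_conj {P A : Matrix ι ι K} (hP : IsUnit P) (hA : IsUnit A.det)
    (e : ι → ℤ) :
    SemiconjBy (1 ⊗ₖ P) (tlMatrix A e) (tlMatrix (P * A * P⁻¹) e) := by
  have hPd : IsUnit P.det := (isUnit_iff_isUnit_det P).mp hP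
  simp only [SemiconjBy, tlMatrix, zpow_conj hP hA]
  simp only [Finset.mul_sum, Finset.sum_mul, ← mul_kronecker_mul, Matrix.one_mul, Matrix.mul_one,
    Matrix.mul_assoc, nonsing_inv_mul _ hPd]

theorem tlMatrix_diagonal_apply {v : ι → K} (hv : ∀ i, v i ≠ 0) (e : ι → ℤ) (a i b j : ι) :
    tlMatrix (diagonal v) e (a, i) (b, j) = if i = j then v i ^ (e a - e b) else 0 := by
  simp [tlMatrix, diagonal_zpow hv, Matrix.sum_apply, single_apply, diagonal_apply, ite_and]

def leg12 (T : Matrix (ι × ι) (ι × ι) K) : Matrix (ι × ι × ι) (ι × ι × ι) K :=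
  reindex (Equiv.prodAssoc ι ι ι) (Equiv.prodAssoc ι ι ι) (T ⊗ₖ (1 : Matrix ι ι K))

theorem SemiconjBy.leg12 {X Y C : Matrix ι ι K} {A B : Matrix (ι × ι) (ι × ι) K}
    (h : SemiconjBy (X ⊗ₖ Y) A B) : SemiconjBy (X ⊗ₖ (Y ⊗ₖ C)) (leg12 A) (leg12 B) := by
  have := (h.kronecker (SemiconjBy.one_right C)).map
    (reindexAlgEquiv K K (Equiv.prodAssoc ι ι ι))
  rw [coe_reindexAlgEquiv, kronecker_assoc] at this
  exact this

theorem leg12_mul_one_kronecker_mul_leg12_apply (T S : Matrix (ι × ι) (ι × ι) K)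
    (a x c b y z : ι) :
    (leg12 T * ((1 : Matrix ι ι K) ⊗ₖ S) * leg12 T) (a, x, c) (b, y, z) =
      ∑ s, ∑ t, ∑ q, T (a, x) (s, q) * S (q, c) (t, z) * T (s, t) (b, y) := by
  simp [leg12, Matrix.mul_apply, Fintype.sum_prod_type, one_apply, Finset.sum_mul]

theorem conj_tlMatrix_diagonal_apply {P : Matrix ι ι K} {v : ι → K} (hv : ∀ i, v i ≠ 0)
    (e : ι → ℤ) (i u j w : ι) :
    ((P⁻¹ ⊗ₖ (1 : Matrix ι ι K)) * tlMatrix (diagonal v) e * (P ⊗ₖ (1 : Matrix ι ι K)))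
      (i, u) (j, w) =
      if u = w then ∑ k, ∑ l, P⁻¹ i k * P l j * v u ^ (e k - e l) else 0 := by
  simp only [Matrix.mul_apply, kroneckerMap_apply, one_apply, mul_ite, mul_one, mul_zero,
    tlMatrix_diagonal_apply hv, ite_mul, zero_mul, Fintype.sum_prod_type, Finset.sum_ite_eq',
    Finset.mem_univ, if_true, Finset.sum_ite_irrel, Finset.sum_const_zero]
  split_ifs with h
  · subst h
    simp only [Finset.sum_mul]
    rw [Finset.sum_comm]
    exact Finset.sum_congr rfl fun _ _ => Finset.sum_congr rfl fun _ _ => mul_right_comm _ _ _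
  · rfl

theorem leg12_tlMatrix_triple_apply {P : Matrix ι ι K} {v : ι → K} (hv : ∀ i, v i ≠ 0)
    (e : ι → ℤ) (a i u b j w : ι) :
    (leg12 (tlMatrix (diagonal v) e) *
        ((1 : Matrix ι ι K) ⊗ₖ ((P⁻¹ ⊗ₖ (1 : Matrix ι ι K)) * tlMatrix (diagonal v) e *
          (P ⊗ₖ (1 : Matrix ι ι K)))) *
        leg12 (tlMatrix (diagonal v) e)) (a, i, u) (b, j, w) =
      if u = w then v i ^ e a * v j ^ (-e b) *
        ((∑ r, (v j / v i) ^ e r) * ∑ k, ∑ l, P⁻¹ i k * P l j * v u ^ (e k - e l))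
      else 0 := by
  rw [leg12_mul_one_kronecker_mul_leg12_apply]
  simp only [tlMatrix_diagonal_apply hv, conj_tlMatrix_diagonal_apply hv]
  simp only [mul_ite, ite_mul, mul_zero, zero_mul, Finset.sum_ite_eq, Finset.sum_ite_eq',
    Finset.mem_univ, if_true, Finset.sum_ite_irrel, Finset.sum_const_zero]
  refine if_congr Iff.rfl ?_ rfl
  set W := ∑ k, ∑ l, P⁻¹ i k * P l j * v u ^ (e k - e l)
  calc ∑ s, v i ^ (e a - e s) * W * v j ^ (e s - e b)
      = ∑ s, v i ^ e a * v j ^ (-e b) * (v j / v i) ^ e s * W := by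
        refine Finset.sum_congr rfl fun s _ => ?_
        rw [zpow_sub₀ (hv i), zpow_sub₀ (hv j), _root_.zpow_neg, div_zpow]
        field_simp
    _ = _ := by rw [← Finset.sum_mul, ← Finset.mul_sum, mul_assoc]

theorem smul_leg12_tlMatrix_apply {v : ι → K} (hv : ∀ i, v i ≠ 0) (e : ι → ℤ) (c : K)
    (a i u b j w : ι) :
    (c • leg12 (tlMatrix (diagonal v) e)) (a, i, u) (b, j, w) =
      if u = w then v i ^ e a * v j ^ (-e b) * (if i = j then c else 0) else 0 := by
  simp only [leg12, reindex_apply, Matrix.smul_apply, submatrix_apply, Equiv.prodAssoc_symm_apply,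
    kroneckerMap_apply, tlMatrix_diagonal_apply hv, one_apply, mul_ite, mul_one, mul_zero,
    smul_eq_mul, _root_.zpow_neg]
  split_ifs with huw hij
  · subst hij
    rw [zpow_sub₀ (hv i)]
    ring
  all_goals rfl

theorem leg12_tlMatrix_triple_eq_smul_iff {P : Matrix ι ι K} {v : ι → K} (hv : ∀ i, v i ≠ 0)
    (e : ι → ℤ) (c : K) :
    leg12 (tlMatrix (diagonal v) e) *
        ((1 : Matrix ι ι K) ⊗ₖ ((P⁻¹ ⊗ₖ (1 : Matrix ι ι K)) * tlMatrix (diagonal v) e *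
          (P ⊗ₖ (1 : Matrix ι ι K)))) *
        leg12 (tlMatrix (diagonal v) e) = c • leg12 (tlMatrix (diagonal v) e) ↔
      ∀ i j u, (∑ r, (v j / v i) ^ e r) * (∑ k, ∑ l, P⁻¹ i k * P l j * v u ^ (e k - e l)) =
        if i = j then c else 0 := by
  constructor
  · intro h i j u
    have hentry := congr_fun (congr_fun h (i, i, u)) (i, j, u)
    rw [leg12_tlMatrix_triple_apply hv, smul_leg12_tlMatrix_apply hv, if_pos rfl, if_pos rfl]
      at hentry
    exact mul_left_cancel₀ (mul_ne_zero (zpow_ne_zero _ (hv i)) (zpow_ne_zero _ (hv j))) hentry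
  · intro h
    ext ⟨a, i, u⟩ ⟨b, j, w⟩
    rw [leg12_tlMatrix_triple_apply hv, smul_leg12_tlMatrix_apply hv, h]

theorem leg12_tlMatrix_conj_triple_eq_smul_iff {P : Matrix ι ι K} (hP : IsUnit P) {v : ι → K}
    (hv : ∀ i, v i ≠ 0) (e : ι → ℤ) (c : K) :
    leg12 (tlMatrix (P * diagonal v * P⁻¹) e) *
        ((1 : Matrix ι ι K) ⊗ₖ tlMatrix (P * diagonal v * P⁻¹) e) *
        leg12 (tlMatrix (P * diagonal v * P⁻¹) e) =
        c • leg12 (tlMatrix (P * diagonal v * P⁻¹) e) ↔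
      ∀ i j u, (∑ r, (v j / v i) ^ e r) * (∑ k, ∑ l, P⁻¹ i k * P l j * v u ^ (e k - e l)) =
        if i = j then c else 0 := by
  have hPd : IsUnit P.det := (isUnit_iff_isUnit_det P).mp hP
  have hdiag : IsUnit (diagonal v).det := by
    simpa [det_diagonal, Finset.prod_ne_zero_iff] using hv
  set D := tlMatrix (diagonal v) e
  set T := tlMatrix (P * diagonal v * P⁻¹) e
  set S := (P⁻¹ ⊗ₖ (1 : Matrix ι ι K)) * D * (P ⊗ₖ (1 : Matrix ι ι K))
  have hT : SemiconjBy ((1 : Matrix ι ι K) ⊗ₖ P) D T := semiconjBy_tlMatrix_conj hP hdiag e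
  have hS : SemiconjBy (P ⊗ₖ (1 : Matrix ι ι K)) S D := by
    rw [SemiconjBy, ← Matrix.mul_assoc, ← Matrix.mul_assoc, ← mul_kronecker_mul,
      mul_nonsing_inv _ hPd, Matrix.one_mul, one_kronecker_one, Matrix.one_mul]
  have hST : SemiconjBy (P ⊗ₖ P) S T := by
    simpa only [← mul_kronecker_mul, Matrix.one_mul, Matrix.mul_one] using hT.mul_left hS
  have h12 : SemiconjBy ((1 : Matrix ι ι K) ⊗ₖ (P ⊗ₖ P)) (leg12 D) (leg12 T) := hT.leg12
  have h23 : SemiconjBy ((1 : Matrix ι ι K) ⊗ₖ (P ⊗ₖ P)) (1 ⊗ₖ S) (1 ⊗ₖ T) :=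
    (SemiconjBy.one_right 1).kronecker hST
  have hR : IsUnit ((1 : Matrix ι ι K) ⊗ₖ (P ⊗ₖ P)) := isUnit_one.kronecker (hP.kronecker hP)
  rw [((h12.mul_right h23).mul_right h12).eq_iff_of_isUnit hR (h12.smul_right c)]
  exact leg12_tlMatrix_triple_eq_smul_iff hv e c

theorem master_equation_general (n : ℕ)
    (P : Matrix (Fin n) (Fin n) ℂ) (hP : IsUnit P)
    (lam : Fin n → ℂ) (hlam : ∀ i, lam i ≠ 0)
    (e : Fin n → ℤ)
    (M : Matrix (Fin n) (Fin n) ℂ)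
    (hM : M = P * Matrix.diagonal lam * P⁻¹)
    (T : Matrix (Fin n × Fin n) (Fin n × Fin n) ℂ)
    (hT : T = ∑ a : Fin n, ∑ b : Fin n,
      (Matrix.single a b (1 : ℂ)) ⊗ₖ (M ^ (e a - e b)))
    (T12 : Matrix (Fin n × Fin n × Fin n) (Fin n × Fin n × Fin n) ℂ)
    (hT12 : T12 = Matrix.reindex (Equiv.prodAssoc (Fin n) (Fin n) (Fin n))
      (Equiv.prodAssoc (Fin n) (Fin n) (Fin n))
      (T ⊗ₖ (1 : Matrix (Fin n) (Fin n) ℂ)))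
    (T23 : Matrix (Fin n × Fin n × Fin n) (Fin n × Fin n × Fin n) ℂ)
    (hT23 : T23 = (1 : Matrix (Fin n) (Fin n) ℂ) ⊗ₖ T) :
    T12 * T23 * T12 = (n : ℂ) • T12 ↔
      ∀ i j u : Fin n,
        (∑ r : Fin n, (lam j / lam i) ^ (e r)) *
          (∑ k : Fin n, ∑ l : Fin n, P⁻¹ i k * P l j * lam u ^ (e k - e l)) =
          if i = j then (n : ℂ) else 0 := by
  subst hM hT hT12 hT23
  exact leg12_tlMatrix_conj_triple_eq_smul_iff hP hlam e n

/-- the master equation. With `M = P Λ P⁻¹`, `Λ = diag(λ)`,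
`T = Σ_{a,b} E_{ab} ⊗ M^(n_a - n_b)`, `T₁₂ = T ⊗ I`, `T₂₃ = I ⊗ T`, the
Temperley–Lieb condition `T₁₂ T₂₃ T₁₂ = n T₁₂` holds iff for all `i, j, u`:
`(Σ_r (λ_j/λ_i)^(n_r)) (Σ_{k,l} (P⁻¹)_{ik} P_{lj} λ_u^(n_k - n_l)) = n δ_{ij}`. -/
theorem master_equation (n : ℕ) (hn : 1 ≤ n)
    (P : Matrix (Fin n) (Fin n) ℂ) (hP : IsUnit P)
    (lam : Fin n → ℂ) (hlam : ∀ i, lam i ≠ 0)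
    (e : Fin n → ℤ)
    (M : Matrix (Fin n) (Fin n) ℂ)
    (hM : M = P * Matrix.diagonal lam * P⁻¹)
    (T : Matrix (Fin n × Fin n) (Fin n × Fin n) ℂ)
    (hT : T = ∑ a : Fin n, ∑ b : Fin n,
      (Matrix.single a b (1 : ℂ)) ⊗ₖ (M ^ (e a - e b)))
    (T12 : Matrix (Fin n × Fin n × Fin n) (Fin n × Fin n × Fin n) ℂ)
    (hT12 : T12 = Matrix.reindex (Equiv.prodAssoc (Fin n) (Fin n) (Fin n))
      (Equiv.prodAssoc (Fin n) (Fin n) (Fin n))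
      (T ⊗ₖ (1 : Matrix (Fin n) (Fin n) ℂ)))
    (T23 : Matrix (Fin n × Fin n × Fin n) (Fin n × Fin n × Fin n) ℂ)
    (hT23 : T23 = (1 : Matrix (Fin n) (Fin n) ℂ) ⊗ₖ T) :
    T12 * T23 * T12 = (n : ℂ) • T12 ↔
      ∀ i j u : Fin n,
        (∑ r : Fin n, (lam j / lam i) ^ (e r)) *
          (∑ k : Fin n, ∑ l : Fin n, P⁻¹ i k * P l j * lam u ^ (e k - e l)) =
          if i = j then (n : ℂ) else 0 :=
  master_equation_general n P hP lam hlam e M hM T hT T12 hT12 T23 hT23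
end

section
/- Let n ≥ 1, let P be an invertible n×n complex matrix, let λ_1,…,λ_n be nonzero complex numbers and n_1,…,n_n be integers, and suppose the master equation holds: for all i, j, u ∈ {1,…,n}, (Σ_{r=1}^{n} (λ_j/λ_i)^{n_r}) · (Σ_{k,l=1}^{n} (P^{−1})_{ik} P_{lj} λ_u^{n_k−n_l}) = n·δ_{ij}. Then for all i, j ∈ {1,…,n}: Σ_{a=1}^{n} (λ_i/λ_j)^{n_a} = n·δ_{ij}; in particular the master matrix Ω defined by Ω_{ij} = λ_i^{n_j} is invertible and satisfies the generalized Hadamard condition 1/Ω_{ij} = n·(Ω^{−1})_{ji} for all i, j. -/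
open Matrix

/-! The double sum in the master equation factors as `A i * B j` for fixed `u`. Its diagonal
entries `i = j` force `A i * B i = 1`, so no `A i` or `B j` vanishes and every off-diagonal
equation leaves `∑_r (λ_j/λ_i)^{n_r} = 0`. These orthogonality relations say that `Ω` times the
transpose of its entrywise inverse is `n • 1`, which is the generalized Hadamard property. -/

section Orthogonality

variable {K ι : Type*} [Field K]

theorem sum_sum_mul_zpow_sub [Fintype ι] (a b : ι → K) (e : ι → ℤ) {x : K} (hx : x ≠ 0) :
    ∑ k, ∑ l, a k * b l * x ^ (e k - e l) =
      (∑ k, a k * x ^ e k) * ∑ l, b l * x ^ (-e l) := by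
  rw [Finset.sum_mul_sum]
  refine Finset.sum_congr rfl fun k _ => Finset.sum_congr rfl fun l _ => ?_
  rw [zpow_sub₀ hx, _root_.zpow_neg, div_eq_mul_inv]
  ring

theorem eq_zero_of_mul_rankOne_eq_ite [DecidableEq ι] {c : K} (hc : c ≠ 0)
    {S : ι → ι → K} (hS : ∀ i, S i i = c) {A B : ι → K}
    (h : ∀ i j, S i j * (A i * B j) = if i = j then c else 0) {i j : ι} (hij : i ≠ j) :
    S i j = 0 := by
  have hAB : ∀ i, A i * B i = 1 := fun i =>
    mul_left_cancel₀ hc (by simpa [hS i] using h i i)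
  have hA : A i ≠ 0 := left_ne_zero_of_mul_eq_one (hAB i)
  have hB : B j ≠ 0 := right_ne_zero_of_mul_eq_one (hAB j)
  simpa [hij, hA, hB] using h i j

end Orthogonality

namespace Matrix

variable {K ι : Type*} [Field K] [Fintype ι]

theorem mul_transpose_map_inv_apply (U : Matrix ι ι K) (i k : ι) :
    (U * (U.map (·⁻¹))ᵀ) i k = ∑ j, U i j / U k j := by
  simp [mul_apply, div_eq_mul_inv]

theorem mul_smul_transpose_map_inv_eq_one [DecidableEq ι] [CharZero K] {U : Matrix ι ι K}
    (hU : U * (U.map (·⁻¹))ᵀ = (Fintype.card ι : K) • 1) :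
    U * ((Fintype.card ι : K)⁻¹ • (U.map (·⁻¹))ᵀ) = 1 := by
  cases isEmpty_or_nonempty ι
  · exact Subsingleton.elim _ _
  · have hc : (Fintype.card ι : K) ≠ 0 := by simp [Fintype.card_ne_zero]
    rw [Matrix.mul_smul, hU, smul_smul, inv_mul_cancel₀ hc, one_smul]

end Matrix

theorem master_matrix_is_GHM_general (n : ℕ)
    (P : Matrix (Fin n) (Fin n) ℂ)
    (lam : Fin n → ℂ) (hlam : ∀ i, lam i ≠ 0)
    (e : Fin n → ℤ)
    (hmaster : ∀ i j u : Fin n,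
      (∑ r : Fin n, (lam j / lam i) ^ (e r)) *
        (∑ k : Fin n, ∑ l : Fin n, P⁻¹ i k * P l j * lam u ^ (e k - e l)) =
        if i = j then (n : ℂ) else 0)
    (Ω : Matrix (Fin n) (Fin n) ℂ)
    (hΩ : Ω = Matrix.of fun i j => lam i ^ (e j)) :
    (∀ i j : Fin n, ∑ a : Fin n, (lam i / lam j) ^ (e a) = if i = j then (n : ℂ) else 0)
      ∧ IsUnit Ω
      ∧ ∀ i j : Fin n, (Ω i j)⁻¹ = (n : ℂ) * Ω⁻¹ j i := by
  have hn (i : Fin n) : (n : ℂ) ≠ 0 := Nat.cast_ne_zero.2 (Fin.pos i).ne'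
  have hdiag (i : Fin n) : ∑ a : Fin n, (lam i / lam i) ^ (e a) = n := by
    simp [div_self (hlam i)]
  have horth (i j : Fin n) :
      ∑ a : Fin n, (lam i / lam j) ^ (e a) = if i = j then (n : ℂ) else 0 := by
    by_cases hij : i = j
    · rw [if_pos hij, hij, hdiag]
    · rw [if_neg hij]
      refine eq_zero_of_mul_rankOne_eq_ite (S := fun a b => ∑ r, (lam b / lam a) ^ e r)
        (A := fun a => ∑ k, P⁻¹ a k * lam i ^ e k)
        (B := fun b => ∑ l, P l b * lam i ^ (-e l))
        (hn i) hdiag (fun a b => ?_) (Ne.symm hij)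
      rw [← hmaster a b i, sum_sum_mul_zpow_sub _ _ _ (hlam i)]
  have hΩΩ : Ω * (Ω.map (·⁻¹))ᵀ = (n : ℂ) • 1 := by
    ext i k
    simp [mul_transpose_map_inv_apply, hΩ, ← div_zpow, horth, Matrix.one_apply]
  have hright := mul_smul_transpose_map_inv_eq_one (U := Ω) (by rwa [Fintype.card_fin])
  refine ⟨horth, (isUnit_iff_isUnit_det _).2 (isUnit_det_of_right_inverse hright),
    fun i j => ?_⟩
  simp [inv_eq_right_inv hright, hn i]

/-- if the master equation holds, then
`Σ_a (λ_i/λ_j)^(n_a) = n δ_{ij}` for all `i, j`; in particular the master matrix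
`Ω`, `Ω_{ij} = λ_i^(n_j)`, is invertible and satisfies the generalized Hadamard
condition `1/Ω_{ij} = n (Ω⁻¹)_{ji}`. -/
theorem master_matrix_is_GHM (n : ℕ) (hn : 1 ≤ n)
    (P : Matrix (Fin n) (Fin n) ℂ) (hP : IsUnit P)
    (lam : Fin n → ℂ) (hlam : ∀ i, lam i ≠ 0)
    (e : Fin n → ℤ)
    (hmaster : ∀ i j u : Fin n,
      (∑ r : Fin n, (lam j / lam i) ^ (e r)) *
        (∑ k : Fin n, ∑ l : Fin n, P⁻¹ i k * P l j * lam u ^ (e k - e l)) =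
        if i = j then (n : ℂ) else 0)
    (Ω : Matrix (Fin n) (Fin n) ℂ)
    (hΩ : Ω = Matrix.of fun i j => lam i ^ (e j)) :
    (∀ i j : Fin n, ∑ a : Fin n, (lam i / lam j) ^ (e a) = if i = j then (n : ℂ) else 0)
      ∧ IsUnit Ω
      ∧ ∀ i j : Fin n, (Ω i j)⁻¹ = (n : ℂ) * Ω⁻¹ j i :=
  master_matrix_is_GHM_general n P lam hlam e hmaster Ω hΩ
end

section
/- Let n ≥ 1, let P be an invertible n×n complex matrix, let λ_1,…,λ_n be nonzero complex numbers and n_1,…,n_n be integers, and suppose the master equation holds: for all i, j, u ∈ {1,…,n}, (Σ_{r=1}^{n} (λ_j/λ_i)^{n_r}) · (Σ_{k,l=1}^{n} (P^{−1})_{ik} P_{lj} λ_u^{n_k−n_l}) = n·δ_{ij}. Then the integers n_1,…,n_n are pairwise distinct and the complex numbers λ_1,…,λ_n are pairwise distinct. -/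
/-!
Fix any index `u` and put `x i = ∑ₖ (P⁻¹)ᵢₖ λᵤ^{nₖ}`, `y j = ∑ₗ Pₗⱼ λᵤ^{-nₗ}`: the double sum
in the master equation factors as `x i * y j`. The diagonal equations give `x i * y i = 1`, so
every `x i` and `y j` is nonzero and the off-diagonal equations force `∑ᵣ (λⱼ/λᵢ)^{nᵣ} = 0` for
`i ≠ j`. If `λᵢ = λⱼ` this sum is `n ≠ 0`. If `nₐ = n_b`, then the matrix `D = (λᵢ^{nᵣ})` has two
equal columns, although `D * (λⱼ^{-nᵣ})ᵣⱼ = n • 1`.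
-/

open Matrix

theorem eq_zero_of_mul_mul_eq_ite {ι R : Type*} [Ring R] [IsDomain R] [DecidableEq ι]
    {S : ι → ι → R} (x y : ι → R) {c : R} (hc : c ≠ 0) (hS : ∀ i, S i i = c)
    (h : ∀ i j, S i j * (x i * y j) = if i = j then c else 0) {i j : ι} (hij : i ≠ j) :
    S i j = 0 := by
  have hxy : ∀ k, x k * y k = 1 := fun k =>
    mul_left_cancel₀ hc (by rw [mul_one, ← hS k, h k k, if_pos rfl, hS k])
  have hx : x i ≠ 0 := left_ne_zero_of_mul_eq_one (hxy i)
  have hy : y j ≠ 0 := right_ne_zero_of_mul_eq_one (hxy j)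
  have := h i j
  rw [if_neg hij] at this
  exact (mul_eq_zero.mp this).resolve_right (mul_ne_zero hx hy)

section PowerSums

variable {ι K : Type*} [Fintype ι] [Field K]

theorem sum_mul_mul_zpow_sub_eq_mul (a b : ι → K) (f : ι → ℤ) {c : K} (hc : c ≠ 0) :
    ∑ k, ∑ l, a k * b l * c ^ (f k - f l) =
      (∑ k, a k * c ^ f k) * ∑ l, b l * c ^ (-f l) := by
  rw [Finset.sum_mul_sum]
  refine Finset.sum_congr rfl fun k _ => Finset.sum_congr rfl fun l _ => ?_
  rw [sub_eq_add_neg, zpow_add₀ hc]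
  ring

theorem sum_zpow_div_self (μ : ι → K) (f : ι → ℤ) {i : ι} (hμ : μ i ≠ 0) :
    ∑ r, (μ i / μ i) ^ f r = Fintype.card ι := by
  simp [div_self hμ]

variable [CharZero K] {μ : ι → K} (hμ : ∀ i, μ i ≠ 0)
include hμ

theorem injective_of_sum_zpow_div_eq_zero (f : ι → ℤ)
    (h : ∀ i j, i ≠ j → ∑ r, (μ j / μ i) ^ f r = 0) : Function.Injective μ := by
  intro a b hab
  by_contra hne
  have hcard : (Fintype.card ι : K) ≠ 0 :=
    Nat.cast_ne_zero.mpr (Fintype.card_pos_iff.mpr ⟨a⟩).ne'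
  have := h b a (Ne.symm hne)
  rw [hab, sum_zpow_div_self μ f (hμ b)] at this
  exact hcard this

theorem injective_exponent_of_sum_zpow_div_eq_zero [DecidableEq ι] {f : ι → ℤ}
    (h : ∀ i j, i ≠ j → ∑ r, (μ j / μ i) ^ f r = 0) : Function.Injective f := by
  intro a b hab
  by_contra hne
  have hcard : (Fintype.card ι : K) ≠ 0 :=
    Nat.cast_ne_zero.mpr (Fintype.card_pos_iff.mpr ⟨a⟩).ne'
  set D : Matrix ι ι K := of fun i r => μ i ^ f r
  set E : Matrix ι ι K := of fun r j => μ j ^ (-f r)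
  have hDE : D * E = (Fintype.card ι : K) • (1 : Matrix ι ι K) := by
    ext i j
    have hterm : ∀ r, D i r * E r j = (μ i / μ j) ^ f r := fun r => by
      rw [div_zpow, div_eq_mul_inv, ← _root_.zpow_neg]
      rfl
    rw [mul_apply, Finset.sum_congr rfl fun r _ => hterm r]
    by_cases hij : i = j
    · subst hij
      simp [sum_zpow_div_self μ f (hμ i)]
    · simp [h j i (Ne.symm hij), one_apply_ne hij]
  have hD : D.det = 0 := det_zero_of_column_eq hne fun i => by simp [D, hab]
  have := congrArg det hDE
  rw [det_mul, hD, zero_mul, det_smul, det_one, mul_one] at this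
  exact pow_ne_zero _ hcard this.symm

end PowerSums

theorem master_equation_distinct_general (n : ℕ)
    (P : Matrix (Fin n) (Fin n) ℂ)
    (lam : Fin n → ℂ) (hlam : ∀ i, lam i ≠ 0)
    (e : Fin n → ℤ)
    (hmaster : ∀ i j u : Fin n,
      (∑ r : Fin n, (lam j / lam i) ^ (e r)) *
        (∑ k : Fin n, ∑ l : Fin n, P⁻¹ i k * P l j * lam u ^ (e k - e l)) =
        if i = j then (n : ℂ) else 0) :
    Function.Injective e ∧ Function.Injective lam := by
  have hoff : ∀ i j, i ≠ j → ∑ r, (lam j / lam i) ^ e r = 0 := by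
    intro i j hij
    refine eq_zero_of_mul_mul_eq_ite (S := fun k l => ∑ r, (lam l / lam k) ^ e r)
      (fun k => ∑ l, P⁻¹ k l * lam i ^ e l)
      (fun k => ∑ l, P l k * lam i ^ (-e l)) (Nat.cast_ne_zero.mpr (Fin.pos i).ne')
      (fun k => by simpa using sum_zpow_div_self lam e (hlam k)) (fun k l => ?_) hij
    rw [← sum_mul_mul_zpow_sub_eq_mul _ _ _ (hlam i)]
    exact hmaster k l i
  exact ⟨injective_exponent_of_sum_zpow_div_eq_zero hlam hoff,
    injective_of_sum_zpow_div_eq_zero hlam e hoff⟩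

/-- if the master equation holds then the integers `n_1, …, n_n` are
pairwise distinct and the eigenvalues `λ_1, …, λ_n` are pairwise distinct. -/
theorem master_equation_distinct (n : ℕ) (hn : 1 ≤ n)
    (P : Matrix (Fin n) (Fin n) ℂ) (hP : IsUnit P)
    (lam : Fin n → ℂ) (hlam : ∀ i, lam i ≠ 0)
    (e : Fin n → ℤ)
    (hmaster : ∀ i j u : Fin n,
      (∑ r : Fin n, (lam j / lam i) ^ (e r)) *
        (∑ k : Fin n, ∑ l : Fin n, P⁻¹ i k * P l j * lam u ^ (e k - e l)) =
        if i = j then (n : ℂ) else 0) :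
    Function.Injective e ∧ Function.Injective lam :=
  master_equation_distinct_general n P lam hlam e hmaster
end

section
/- Let n ≥ 1, let P be an invertible n×n complex matrix, let λ_1,…,λ_n be nonzero complex numbers and n_1,…,n_n be integers, let Ω be the matrix with Ω_{ij} = λ_i^{n_j} and Ω^{−H} the matrix with (Ω^{−H})_{ij} = 1/Ω_{ij}, and suppose the master equation holds: for all i, j, u ∈ {1,…,n}, (Σ_{r=1}^{n} (λ_j/λ_i)^{n_r}) · (Σ_{k,l=1}^{n} (P^{−1})_{ik} P_{lj} λ_u^{n_k−n_l}) = n·δ_{ij}. Then the matrices P^{−1}·Ωᵗ and Ω^{−H}·P are full, i.e. all of their entries are nonzero. -/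
open Matrix

/-! On the diagonal `i = j` the first factor of the master equation equals `n`, so the double
sum equals `1`. That double sum factors as the product of the entries `(P⁻¹ Ωᵗ)_{iu}` and
`(Ω^{-H} P)_{ui}`, since `Ω_{uk} / Ω_{ul} = λ_u^{n_k - n_l}`; hence neither entry vanishes. -/

section HadamardInverse

variable {m ι p q K : Type*} [Fintype ι] [Field K]

theorem mul_transpose_apply_mul_hadamardInv_mul_apply (A : Matrix m ι K) (M : Matrix p ι K)
    (B : Matrix ι q K) (i : m) (u : p) (j : q) :
    (A * Mᵀ) i u * ((of fun i j => (M i j)⁻¹) * B) u j =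
      ∑ k, ∑ l, A i k * B l j * (M u k / M u l) := by
  rw [mul_apply, mul_apply, Finset.sum_mul_sum]
  refine Finset.sum_congr rfl fun k _ => Finset.sum_congr rfl fun l _ => ?_
  simp only [transpose_apply, of_apply]
  ring

theorem mul_transpose_zpow_apply_mul_hadamardInv_mul_apply (A : Matrix m ι K)
    (lam : p → K) (e : ι → ℤ) (B : Matrix ι q K) (i : m) (u : p) (j : q) (hu : lam u ≠ 0) :
    (A * (of fun i j => lam i ^ e j)ᵀ) i u *
        ((of fun i j => (of (fun i j => lam i ^ e j) i j)⁻¹) * B) u j =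
      ∑ k, ∑ l, A i k * B l j * lam u ^ (e k - e l) := by
  rw [mul_transpose_apply_mul_hadamardInv_mul_apply]
  simp only [of_apply, zpow_sub₀ hu]

end HadamardInverse

theorem full_matrices_of_master_equation_general (n : ℕ)
    (P : Matrix (Fin n) (Fin n) ℂ)
    (lam : Fin n → ℂ) (hlam : ∀ i, lam i ≠ 0)
    (e : Fin n → ℤ)
    (Ω : Matrix (Fin n) (Fin n) ℂ)
    (hΩ : Ω = Matrix.of fun i j => lam i ^ (e j))
    (ΩH : Matrix (Fin n) (Fin n) ℂ)
    (hΩH : ΩH = Matrix.of fun i j => (Ω i j)⁻¹)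
    (hmaster : ∀ i j u : Fin n,
      (∑ r : Fin n, (lam j / lam i) ^ (e r)) *
        (∑ k : Fin n, ∑ l : Fin n, P⁻¹ i k * P l j * lam u ^ (e k - e l)) =
        if i = j then (n : ℂ) else 0) :
    (∀ i u : Fin n, (P⁻¹ * Ωᵀ) i u ≠ 0) ∧ (∀ u i : Fin n, (ΩH * P) u i ≠ 0) := by
  have entries_mul_eq_one : ∀ i u, (P⁻¹ * Ωᵀ) i u * (ΩH * P) u i = 1 := by
    intro i u
    have hn : (n : ℂ) ≠ 0 := Nat.cast_ne_zero.mpr i.pos.ne'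
    have hdiag := hmaster i i u
    simp only [div_self (hlam i), _root_.one_zpow, Finset.sum_const, Finset.card_univ,
      Fintype.card_fin, nsmul_eq_mul, mul_one, if_pos] at hdiag
    rw [hΩH, hΩ, mul_transpose_zpow_apply_mul_hadamardInv_mul_apply _ _ _ _ _ _ _ (hlam u)]
    exact mul_left_cancel₀ hn (hdiag.trans (mul_one _).symm)
  exact ⟨fun i u => left_ne_zero_of_mul_eq_one (entries_mul_eq_one i u),
    fun u i => right_ne_zero_of_mul_eq_one (entries_mul_eq_one i u)⟩

/-- if the master equation holds, then the matrices `P⁻¹ Ωᵗ` and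
`Ω^{-H} P` are full, i.e. all of their entries are nonzero. Here `Ω_{ij} = λ_i^(n_j)`
and `(Ω^{-H})_{ij} = 1/Ω_{ij}` is the Hadamard inverse. -/
theorem full_matrices_of_master_equation (n : ℕ) (hn : 1 ≤ n)
    (P : Matrix (Fin n) (Fin n) ℂ) (hP : IsUnit P)
    (lam : Fin n → ℂ) (hlam : ∀ i, lam i ≠ 0)
    (e : Fin n → ℤ)
    (Ω : Matrix (Fin n) (Fin n) ℂ)
    (hΩ : Ω = Matrix.of fun i j => lam i ^ (e j))
    (ΩH : Matrix (Fin n) (Fin n) ℂ)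
    (hΩH : ΩH = Matrix.of fun i j => (Ω i j)⁻¹)
    (hmaster : ∀ i j u : Fin n,
      (∑ r : Fin n, (lam j / lam i) ^ (e r)) *
        (∑ k : Fin n, ∑ l : Fin n, P⁻¹ i k * P l j * lam u ^ (e k - e l)) =
        if i = j then (n : ℂ) else 0) :
    (∀ i u : Fin n, (P⁻¹ * Ωᵀ) i u ≠ 0) ∧ (∀ u i : Fin n, (ΩH * P) u i ≠ 0) :=
  full_matrices_of_master_equation_general n P lam hlam e Ω hΩ ΩH hΩH hmaster
end

section
/- Let n ≥ 1, let λ_1,…,λ_n be nonzero complex numbers and n_1,…,n_n integers satisfying Σ_{a=1}^{n} (λ_i/λ_j)^{n_a} = n·δ_{ij} for all i, j, let Ω be the matrix with Ω_{ij} = λ_i^{n_j} and Ω^{−H} its Hadamard inverse, and let P be an invertible n×n complex matrix. Then the condition (P^{−1}·Ωᵗ)_{iu} · (Ω^{−H}·P)_{ui} = 1 for all i, u ∈ {1,…,n} holds if and only if the matrix H := Ω^{−H}·P is a generalized Hadamard matrix, i.e. H is invertible, all entries of H are nonzero, and 1/H_{ij} = n·(H^{−1})_{ji} for all i, j. -/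
/-!
The orthogonality relation `Σ_a (λ_i/λ_j)^(n_a) = n δ_ij` says `Ω^{-H} Ωᵀ = n • 1`, hence
`H (P⁻¹ Ωᵀ) = n • 1`, i.e. `P⁻¹ Ωᵀ = n H⁻¹`. The eigenvector condition thus reads
`n (H⁻¹)_iu H_ui = 1`, which is the generalized Hadamard condition entry by entry.
-/

open Matrix

section

variable {ι K : Type*} [Fintype ι] [DecidableEq ι] [Field K]

def Matrix.IsGeneralizedHadamard (H : Matrix ι ι K) : Prop :=
  IsUnit H ∧ (∀ i j, H i j ≠ 0) ∧ ∀ i j, (H i j)⁻¹ = (Fintype.card ι : K) * H⁻¹ j i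

lemma mul_eq_one_iff_ne_zero_and_inv_eq {x y : K} :
    x * y = 1 ↔ y ≠ 0 ∧ y⁻¹ = x :=
  ⟨fun h => ⟨right_ne_zero_of_mul_eq_one h, (eq_inv_of_mul_eq_one_left h).symm⟩,
    fun ⟨hy, hx⟩ => hx ▸ inv_mul_cancel₀ hy⟩

lemma hadamardInv_mul_transpose_eq_smul_one (lam : ι → K) (e : ι → ℤ) (c : K)
    (h : ∀ i j, ∑ a, (lam i / lam j) ^ e a = if i = j then c else 0) :
    (of fun i j => (lam i ^ e j)⁻¹) * (of fun i j => lam i ^ e j)ᵀ =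
      c • (1 : Matrix ι ι K) := by
  ext i j
  have hterm : ∀ a, (lam i ^ e a)⁻¹ * lam j ^ e a = (lam j / lam i) ^ e a := fun a => by
    rw [div_zpow, div_eq_mul_inv, mul_comm]
  simp only [mul_apply, transpose_apply, of_apply, hterm, h j i, Matrix.smul_apply, one_apply,
    smul_eq_mul, mul_ite, mul_one, mul_zero, eq_comm]

lemma isGeneralizedHadamard_iff_of_mul_eq_smul_one {H B : Matrix ι ι K}
    (hc : (Fintype.card ι : K) ≠ 0)
    (hHB : H * B = (Fintype.card ι : K) • 1) :
    H.IsGeneralizedHadamard ↔ ∀ i u, B i u * H u i = 1 := by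
  set c : K := ((Fintype.card ι : ℕ) : K)
  have hright : H * (c⁻¹ • B) = 1 := by
    rw [Matrix.mul_smul, hHB, smul_smul, inv_mul_cancel₀ hc, one_smul]
  have hB : B = c • H⁻¹ := by
    rw [inv_eq_right_inv hright, smul_smul, mul_inv_cancel₀ hc, one_smul]
  have hunit : IsUnit H := (isUnit_iff_isUnit_det H).mpr (isUnit_det_of_right_inverse hright)
  simp only [IsGeneralizedHadamard, hunit, true_and, hB, Matrix.smul_apply, smul_eq_mul,
    mul_eq_one_iff_ne_zero_and_inv_eq]
  exact ⟨fun ⟨hne, hinv⟩ i u => ⟨hne u i, hinv u i⟩,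
    fun h => ⟨fun i j => (h j i).1, fun i j => (h j i).2⟩⟩

end

theorem eigenvector_condition_iff_GHM_general (n : ℕ) (hn : 1 ≤ n)
    (lam : Fin n → ℂ)
    (e : Fin n → ℤ)
    (hGH : ∀ i j : Fin n, ∑ a : Fin n, (lam i / lam j) ^ (e a) =
      if i = j then (n : ℂ) else 0)
    (Ω : Matrix (Fin n) (Fin n) ℂ)
    (hΩ : Ω = Matrix.of fun i j => lam i ^ (e j))
    (ΩH : Matrix (Fin n) (Fin n) ℂ)
    (hΩH : ΩH = Matrix.of fun i j => (Ω i j)⁻¹)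
    (P : Matrix (Fin n) (Fin n) ℂ) (hP : IsUnit P)
    (H : Matrix (Fin n) (Fin n) ℂ) (hH : H = ΩH * P) :
    (∀ i u : Fin n, (P⁻¹ * Ωᵀ) i u * (ΩH * P) u i = 1) ↔
      (IsUnit H ∧ (∀ i j : Fin n, H i j ≠ 0) ∧
        ∀ i j : Fin n, (H i j)⁻¹ = (n : ℂ) * H⁻¹ j i) := by
  have hc : (Fintype.card (Fin n) : ℂ) ≠ 0 := by
    rw [Fintype.card_fin]
    exact_mod_cast (by omega : n ≠ 0)
  have hHB : H * (P⁻¹ * Ωᵀ) = (Fintype.card (Fin n) : ℂ) • 1 := by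
    rw [hH, mul_assoc, ← mul_assoc P, mul_nonsing_inv P ((isUnit_iff_isUnit_det P).mp hP),
      one_mul, hΩH, hΩ, Fintype.card_fin]
    exact hadamardInv_mul_transpose_eq_smul_one lam e n hGH
  have hGHM := isGeneralizedHadamard_iff_of_mul_eq_smul_one hc hHB
  rw [IsGeneralizedHadamard, Fintype.card_fin] at hGHM
  rw [← hH]
  exact hGHM.symm

/-- given the generalized Hadamard condition on the master matrix
(`Σ_a (λ_i/λ_j)^(n_a) = n δ_{ij}`), the eigenvector condition
`(P⁻¹ Ωᵗ)_{iu} (Ω^{-H} P)_{ui} = 1` for all `i, u` holds iff the matrix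
`H := Ω^{-H} P` is a generalized Hadamard matrix. -/
theorem eigenvector_condition_iff_GHM (n : ℕ) (hn : 1 ≤ n)
    (lam : Fin n → ℂ) (hlam : ∀ i, lam i ≠ 0)
    (e : Fin n → ℤ)
    (hGH : ∀ i j : Fin n, ∑ a : Fin n, (lam i / lam j) ^ (e a) =
      if i = j then (n : ℂ) else 0)
    (Ω : Matrix (Fin n) (Fin n) ℂ)
    (hΩ : Ω = Matrix.of fun i j => lam i ^ (e j))
    (ΩH : Matrix (Fin n) (Fin n) ℂ)
    (hΩH : ΩH = Matrix.of fun i j => (Ω i j)⁻¹)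
    (P : Matrix (Fin n) (Fin n) ℂ) (hP : IsUnit P)
    (H : Matrix (Fin n) (Fin n) ℂ) (hH : H = ΩH * P) :
    (∀ i u : Fin n, (P⁻¹ * Ωᵀ) i u * (ΩH * P) u i = 1) ↔
      (IsUnit H ∧ (∀ i j : Fin n, H i j ≠ 0) ∧
        ∀ i j : Fin n, (H i j)⁻¹ = (n : ℂ) * H⁻¹ j i) :=
  eigenvector_condition_iff_GHM_general n hn lam e hGH Ω hΩ ΩH hΩH P hP H hH
end

section
/- Diţă's construction for generalized Hadamard matrices: let A be an n×n generalized Hadamard matrix and let B^{(1)},…,B^{(n)} be m×m generalized Hadamard matrices. Then the nm×nm matrix C indexed by pairs, defined by C_{(i,k),(j,l)} = A_{ij}·B^{(i)}_{kl} for i,j ∈ {1,…,n} and k,l ∈ {1,…,m}, is a generalized Hadamard matrix: C is invertible, all its entries are nonzero, and 1/C_{pq} = nm·(C^{−1})_{qp} for all indices p, q. -/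
open Matrix

/-!
Put `D_{(j,l),(i,k)} = (A⁻¹)_{ji} (B⁽ⁱ⁾⁻¹)_{lk}`. The `(i,k),(i',k')` entry of `C D` factors as
`(A A⁻¹)_{ii'} · (B⁽ⁱ⁾ B⁽ⁱ'⁾⁻¹)_{kk'} = δ_{ii'} δ_{kk'}`, so `C⁻¹ = D`. Entrywise then
`C_{(i,k),(j,l)}⁻¹ = A_{ij}⁻¹ (B⁽ⁱ⁾_{kl})⁻¹ = n (A⁻¹)_{ji} · m (B⁽ⁱ⁾⁻¹)_{lk} = nm D_{(j,l),(i,k)}`.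
-/

namespace Matrix

variable {ι κ R : Type*} [Fintype ι] [Fintype κ] [DecidableEq ι] [DecidableEq κ]

def IsGeneralizedHadamard_s11 [Field R] (U : Matrix ι ι R) : Prop :=
  IsUnit U ∧ (∀ i j, U i j ≠ 0) ∧ ∀ i j, (U i j)⁻¹ = (Fintype.card ι : R) * U⁻¹ j i

def ditaProduct [Mul R] (A : Matrix ι ι R) (B : ι → Matrix κ κ R) :
    Matrix (ι × κ) (ι × κ) R :=
  of fun p q => A p.1 q.1 * B p.1 p.2 q.2

section CommRing

variable [CommRing R]

theorem ditaProduct_mul_eq_one {A A' : Matrix ι ι R} {B B' : ι → Matrix κ κ R}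
    (hA : A * A' = 1) (hB : ∀ i, B i * B' i = 1) :
    ditaProduct A B * of (fun (q p : ι × κ) => A' q.1 p.1 * B' p.1 q.2 p.2) = 1 := by
  ext ⟨i, k⟩ ⟨j, l⟩
  have hfactor :
      (ditaProduct A B * of fun (q p : ι × κ) => A' q.1 p.1 * B' p.1 q.2 p.2) (i, k) (j, l)
        = (A * A') i j * (B i * B' j) k l := by
    simp only [ditaProduct, mul_apply, of_apply, Fintype.sum_prod_type, Finset.sum_mul,
      Finset.mul_sum]
    rw [Finset.sum_comm]
    exact Finset.sum_congr rfl fun _ _ => Finset.sum_congr rfl fun _ _ => by ring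
  rw [hfactor, hA]
  by_cases hij : i = j
  · subst hij
    simp [hB, one_apply]
  · simp [hij]

theorem inv_ditaProduct {A : Matrix ι ι R} {B : ι → Matrix κ κ R}
    (hA : IsUnit A) (hB : ∀ i, IsUnit (B i)) :
    (ditaProduct A B)⁻¹ = of fun (q p : ι × κ) => A⁻¹ q.1 p.1 * (B p.1)⁻¹ q.2 p.2 :=
  inv_eq_right_inv <| ditaProduct_mul_eq_one (mul_nonsing_inv A (A.isUnit_iff_isUnit_det.mp hA))
    fun i => mul_nonsing_inv _ ((B i).isUnit_iff_isUnit_det.mp (hB i))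

theorem isUnit_ditaProduct {A : Matrix ι ι R} {B : ι → Matrix κ κ R}
    (hA : IsUnit A) (hB : ∀ i, IsUnit (B i)) : IsUnit (ditaProduct A B) :=
  .of_mul_eq_one _ <| ditaProduct_mul_eq_one (mul_nonsing_inv A (A.isUnit_iff_isUnit_det.mp hA))
    fun i => mul_nonsing_inv _ ((B i).isUnit_iff_isUnit_det.mp (hB i))

end CommRing

theorem IsGeneralizedHadamard_s11.ditaProduct [Field R] {A : Matrix ι ι R} {B : ι → Matrix κ κ R}
    (hA : A.IsGeneralizedHadamard_s11) (hB : ∀ i, (B i).IsGeneralizedHadamard_s11) :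
    (A.ditaProduct B).IsGeneralizedHadamard_s11 := by
  obtain ⟨hAunit, hAne, hAinv⟩ := hA
  refine ⟨isUnit_ditaProduct hAunit fun i => (hB i).1,
    fun p q => mul_ne_zero (hAne _ _) ((hB p.1).2.1 _ _), fun p q => ?_⟩
  rw [inv_ditaProduct hAunit fun i => (hB i).1]
  simp only [Matrix.ditaProduct, of_apply, mul_inv, hAinv, (hB _).2.2, Fintype.card_prod,
    Nat.cast_mul]
  ring

end Matrix

/-- Diţă's construction for generalized Hadamard matrices. If `A` is
an `n×n` GHM and `B⁽¹⁾, …, B⁽ⁿ⁾` are `m×m` GHMs, then the `nm×nm` matrix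
`C_{(i,k),(j,l)} = A_{ij} B⁽ⁱ⁾_{kl}` is a GHM. -/
theorem dita_construction_GHM (n m : ℕ)
    (A : Matrix (Fin n) (Fin n) ℂ)
    (hAunit : IsUnit A) (hAfull : ∀ i j : Fin n, A i j ≠ 0)
    (hAGHM : ∀ i j : Fin n, (A i j)⁻¹ = (n : ℂ) * A⁻¹ j i)
    (B : Fin n → Matrix (Fin m) (Fin m) ℂ)
    (hBunit : ∀ i, IsUnit (B i)) (hBfull : ∀ i, ∀ k l : Fin m, B i k l ≠ 0)
    (hBGHM : ∀ i, ∀ k l : Fin m, (B i k l)⁻¹ = (m : ℂ) * (B i)⁻¹ l k)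
    (C : Matrix (Fin n × Fin m) (Fin n × Fin m) ℂ)
    (hC : C = Matrix.of fun p q : Fin n × Fin m => A p.1 q.1 * B p.1 p.2 q.2) :
    IsUnit C ∧ (∀ p q : Fin n × Fin m, C p q ≠ 0) ∧
      ∀ p q : Fin n × Fin m, (C p q)⁻¹ = ((n * m : ℕ) : ℂ) * C⁻¹ q p := by
  have hA : A.IsGeneralizedHadamard_s11 := ⟨hAunit, hAfull, by simpa using hAGHM⟩
  have hB : ∀ i, (B i).IsGeneralizedHadamard_s11 := fun i =>
    ⟨hBunit i, hBfull i, by simpa using hBGHM i⟩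
  have hcard : ((n * m : ℕ) : ℂ) = Fintype.card (Fin n × Fin m) := by simp
  subst hC
  rw [hcard]
  exact hA.ditaProduct hB
end

section
/- For every nonzero complex number a, the 4×4 matrix Ω = [[1,1,1,1],[1,−1,1,−1],[1,a,−1,−a],[1,−a,−1,a]] is a generalized Hadamard matrix: Ω is invertible, all its entries are nonzero, and 1/Ω_{ij} = 4·(Ω^{−1})_{ji} for all i, j ∈ {1,2,3,4}. -/
/-!
Each row of `Ω` pairs with each row of its entrywise inverse to give `4` on the diagonal and `0`
off it, i.e. `Ω * (Ω.map (·⁻¹))ᵀ = 4 • 1`. Hence `Ω⁻¹ = 4⁻¹ • (Ω.map (·⁻¹))ᵀ`, which is exactly the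
generalized Hadamard identity.
-/

open Matrix

variable {n K : Type*} [Fintype n] [DecidableEq n] [Field K]

theorem Matrix.isUnit_and_inv_apply_of_mul_transpose_map_inv {U : Matrix n n K} {d : K}
    (hd : d ≠ 0) (h : U * (U.map (·⁻¹))ᵀ = d • 1) :
    IsUnit U ∧ ∀ i j, (U i j)⁻¹ = d * U⁻¹ j i := by
  have hright : U * (d⁻¹ • (U.map (·⁻¹))ᵀ) = 1 := by
    rw [Matrix.mul_smul, h, smul_smul, inv_mul_cancel₀ hd, one_smul]
  refine ⟨(isUnit_iff_isUnit_det U).mpr (isUnit_det_of_right_inverse hright), fun i j => ?_⟩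
  rw [inv_eq_right_inv hright, smul_apply, transpose_apply, map_apply, smul_eq_mul,
    mul_inv_cancel_left₀ hd]

def thickenedF4 (a : K) : Matrix (Fin 4) (Fin 4) K :=
  !![1, 1, 1, 1;
     1, -1, 1, -1;
     1, a, -1, -a;
     1, -a, -1, a]

theorem thickenedF4_apply_ne_zero {a : K} (ha : a ≠ 0) (i j : Fin 4) :
    thickenedF4 a i j ≠ 0 := by
  fin_cases i <;> fin_cases j <;> simp [thickenedF4, ha]

theorem thickenedF4_mul_transpose_map_inv {a : K} (ha : a ≠ 0) :
    thickenedF4 a * ((thickenedF4 a).map (·⁻¹))ᵀ = (4 : K) • 1 := by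
  ext i j
  fin_cases i <;> fin_cases j <;> simp [thickenedF4, mul_apply, Fin.sum_univ_four, ha] <;> norm_num

/-- for every nonzero complex number `a`, the thickened `F₄` matrix
`Ω = [[1,1,1,1],[1,−1,1,−1],[1,a,−1,−a],[1,−a,−1,a]]` is a generalized Hadamard
matrix. -/
theorem thickened_F4_is_GHM (a : ℂ) (ha : a ≠ 0)
    (Ω : Matrix (Fin 4) (Fin 4) ℂ)
    (hΩ : Ω = !![1, 1, 1, 1;
                 1, -1, 1, -1;
                 1, a, -1, -a;
                 1, -a, -1, a]) :
    IsUnit Ω ∧ (∀ i j : Fin 4, Ω i j ≠ 0) ∧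
      ∀ i j : Fin 4, (Ω i j)⁻¹ = (4 : ℂ) * Ω⁻¹ j i := by
  obtain rfl : Ω = thickenedF4 a := hΩ
  obtain ⟨hunit, hinv⟩ := isUnit_and_inv_apply_of_mul_transpose_map_inv (by norm_num)
    (thickenedF4_mul_transpose_map_inv ha)
  exact ⟨hunit, thickenedF4_apply_ne_zero ha, hinv⟩
end

section
/- Let k, r, s be integers with 0 < r < k and 0 < s < k, let ω = exp(iπ/3) (a primitive 6th root of unity), and define λ_1 = 1, λ_3 = ω², λ_5 = ω⁴, λ_2 = exp(iπ/(3k)), λ_4 = ω²·exp(iπ/(3k)), λ_6 = ω⁴·exp(iπ/(3k)), together with the exponents n_1 = 0, n_2 = 3r+1, n_3 = 3s+2, n_4 = 3k, n_5 = 3k+3r+1, n_6 = 3k+3s+2. Then for all i, j ∈ {1,…,6}: Σ_{a=1}^{6} (λ_i/λ_j)^{n_a} = 6·δ_{ij}. Equivalently, every ratio λ_i/λ_j with i ≠ j is a root of the master polynomial p(z) = (1+z^{3r+1}+z^{3s+2})(1+z^{3k}). -/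
open Matrix Complex

/-!
Write `ζ = ω²`, a primitive cube root of unity, and `e = exp(iπ/(3k))`, so that `e^(3k) = -1`.
Then `λ = (ζ^a e^c)` with `a < 3`, `c < 2`, and `Σ_a z^(n_a)` factors as the master polynomial
`p(z) = (1 + z^(3r+1) + z^(3s+2))(1 + z^(3k))`. A ratio `λ_i/λ_j` with `i ≠ j` either involves
`e^(±1)`, and then its `3k`-th power is `-1`, killing the second factor; or it is `ζ^a/ζ^b` with
`a ≠ b`, a root of `1 + z + z²`, and since the exponents `3r+1`, `3s+2` are `1`, `2` mod `3`
the first factor becomes `1 + z + z² = 0`.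
-/

section MasterPolynomial

variable {R : Type*} [CommRing R] (k r s : ℕ)

def masterPoly (z : R) : R := (1 + z ^ (3 * r + 1) + z ^ (3 * s + 2)) * (1 + z ^ (3 * k))

theorem masterPoly_one : masterPoly k r s (1 : R) = 6 := by
  norm_num [masterPoly]

theorem sum_pow_exponents_eq_masterPoly (z : R) :
    ∑ a : Fin 6, z ^ (![0, 3 * r + 1, 3 * s + 2, 3 * k, 3 * k + 3 * r + 1, 3 * k + 3 * s + 2] a)
      = masterPoly k r s z := by
  simp only [Fin.sum_univ_six, masterPoly, Matrix.cons_val, pow_zero, pow_add, pow_mul]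
  ring

variable {k r s}

theorem masterPoly_eq_zero_of_pow_eq_neg_one {z : R} (hz : z ^ (3 * k) = -1) :
    masterPoly k r s z = 0 := by
  simp [masterPoly, hz]

theorem masterPoly_eq_zero_of_one_add_add_sq {z : R} (hz : 1 + z + z ^ 2 = 0) :
    masterPoly k r s z = 0 := by
  have h3 : z ^ 3 = 1 := by linear_combination (z - 1) * hz
  simp only [masterPoly, pow_add, pow_mul, h3, one_pow, one_mul, pow_one, hz, zero_mul]

end MasterPolynomial

theorem one_add_add_sq_eq_zero {K : Type*} [Field K] {z : K} (h3 : z ^ 3 = 1) (h1 : z ≠ 1) :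
    1 + z + z ^ 2 = 0 := by
  have : (z - 1) * (1 + z + z ^ 2) = 0 := by linear_combination h3
  exact (mul_eq_zero.mp this).resolve_left (sub_ne_zero.mpr h1)

theorem masterPoly_ratio_eq_zero {K : Type*} [Field K] {k r s : ℕ} {ζ e : K}
    (hζ : IsPrimitiveRoot ζ 3) (he0 : e ≠ 0) (he : e ^ (3 * k) = -1) {a b c d : ℕ}
    (ha : a < 3) (hb : b < 3) (hc : c < 2) (hd : d < 2) (hne : a ≠ b ∨ c ≠ d) :
    masterPoly k r s (ζ ^ a * e ^ c / (ζ ^ b * e ^ d)) = 0 := by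
  have hζ0 : ζ ≠ 0 := hζ.ne_zero (by norm_num)
  by_cases hcd : c = d
  · subst hcd
    rw [mul_div_mul_right _ _ (pow_ne_zero _ he0)]
    apply masterPoly_eq_zero_of_one_add_add_sq
    apply one_add_add_sq_eq_zero
    · rw [div_pow, ← pow_mul, ← pow_mul, mul_comm a, mul_comm b, pow_mul, pow_mul,
        hζ.pow_eq_one, one_pow, one_pow, div_one]
    · rw [Ne, div_eq_one_iff_eq (pow_ne_zero _ hζ0)]
      exact fun h => hne.resolve_right (not_not.mpr rfl) (hζ.pow_inj ha hb h)
  · apply masterPoly_eq_zero_of_pow_eq_neg_one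
    have hζk (n : ℕ) : (ζ ^ n) ^ (3 * k) = 1 := by
      rw [← pow_mul, mul_comm, pow_mul, pow_mul, hζ.pow_eq_one, one_pow, one_pow]
    interval_cases c <;> interval_cases d <;> simp_all [div_pow, mul_pow]

theorem Complex.exp_pi_mul_I_div_pow_self {n : ℕ} (hn : n ≠ 0) :
    exp (Real.pi * I / n) ^ n = -1 := by
  rw [← exp_nat_mul, mul_div_cancel₀ _ (Nat.cast_ne_zero.mpr hn), exp_pi_mul_I]

theorem F6_master_matrix_general (k r s : ℕ)
    (hrk : r < k)
    (ω : ℂ) (hω : ω = Complex.exp (Real.pi * Complex.I / 3))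
    (lam : Fin 6 → ℂ)
    (hlam : lam = ![1,
      Complex.exp (Real.pi * Complex.I / (3 * (k : ℂ))),
      ω ^ 2,
      ω ^ 2 * Complex.exp (Real.pi * Complex.I / (3 * (k : ℂ))),
      ω ^ 4,
      ω ^ 4 * Complex.exp (Real.pi * Complex.I / (3 * (k : ℂ)))])
    (ex : Fin 6 → ℕ)
    (hex : ex = ![0, 3 * r + 1, 3 * s + 2, 3 * k, 3 * k + 3 * r + 1, 3 * k + 3 * s + 2]) :
    (∀ i j : Fin 6,
      ∑ a : Fin 6, (lam i / lam j) ^ (ex a) = if i = j then (6 : ℂ) else 0)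
      ∧ ∀ i j : Fin 6, i ≠ j →
          (1 + (lam i / lam j) ^ (3 * r + 1) + (lam i / lam j) ^ (3 * s + 2)) *
            (1 + (lam i / lam j) ^ (3 * k)) = 0 := by
  set e := exp (Real.pi * I / (3 * (k : ℂ)))
  have he : e ^ (3 * k) = -1 := by
    simpa [e] using exp_pi_mul_I_div_pow_self (n := 3 * k) (by omega)
  have hζ : IsPrimitiveRoot (ω ^ 2) 3 := by
    have hω6 : IsPrimitiveRoot ω 6 := by
      convert isPrimitiveRoot_exp 6 (by norm_num) using 2
      rw [hω]; congr 1; ring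
    exact hω6.pow (by norm_num) rfl
  have hlam' : lam = fun i => (ω ^ 2) ^ (i.val / 2) * e ^ (i.val % 2) := by
    funext i; fin_cases i <;> simp [hlam, ← pow_mul]
  have hlam0 (i : Fin 6) : lam i ≠ 0 := by
    rw [hlam']
    exact mul_ne_zero (pow_ne_zero _ (hζ.ne_zero (by norm_num))) (pow_ne_zero _ (exp_ne_zero _))
  have hoff (i j : Fin 6) (hij : i ≠ j) : masterPoly k r s (lam i / lam j) = 0 := by
    rw [hlam']
    exact masterPoly_ratio_eq_zero hζ (exp_ne_zero _) he
      (by omega) (by omega) (by omega) (by omega) (by rw [Ne, Fin.ext_iff] at hij; omega)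
  refine ⟨fun i j => ?_, hoff⟩
  rw [hex, sum_pow_exponents_eq_masterPoly]
  split_ifs with hij
  · rw [hij, div_self (hlam0 j), masterPoly_one]
  · exact hoff i j hij

/-- `F₆` master matrices. Let `0 < r < k`, `0 < s < k`,
`ω = exp(iπ/3)`, `λ = (1, e, ω², ω²e, ω⁴, ω⁴e)` with `e = exp(iπ/(3k))` and
exponents `(0, 3r+1, 3s+2, 3k, 3k+3r+1, 3k+3s+2)`. Then
`Σ_a (λ_i/λ_j)^(n_a) = 6 δ_{ij}`; equivalently every ratio `λ_i/λ_j` with `i ≠ j`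
is a root of the master polynomial `p(z) = (1+z^(3r+1)+z^(3s+2))(1+z^(3k))`. -/
theorem F6_master_matrix (k r s : ℕ)
    (hr : 0 < r) (hrk : r < k) (hs : 0 < s) (hsk : s < k)
    (ω : ℂ) (hω : ω = Complex.exp (Real.pi * Complex.I / 3))
    (lam : Fin 6 → ℂ)
    (hlam : lam = ![1,
      Complex.exp (Real.pi * Complex.I / (3 * (k : ℂ))),
      ω ^ 2,
      ω ^ 2 * Complex.exp (Real.pi * Complex.I / (3 * (k : ℂ))),
      ω ^ 4,
      ω ^ 4 * Complex.exp (Real.pi * Complex.I / (3 * (k : ℂ)))])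
    (ex : Fin 6 → ℕ)
    (hex : ex = ![0, 3 * r + 1, 3 * s + 2, 3 * k, 3 * k + 3 * r + 1, 3 * k + 3 * s + 2]) :
    (∀ i j : Fin 6,
      ∑ a : Fin 6, (lam i / lam j) ^ (ex a) = if i = j then (6 : ℂ) else 0)
      ∧ ∀ i j : Fin 6, i ≠ j →
          (1 + (lam i / lam j) ^ (3 * r + 1) + (lam i / lam j) ^ (3 * s + 2)) *
            (1 + (lam i / lam j) ^ (3 * k)) = 0 :=
  F6_master_matrix_general k r s hrk ω hω lam hlam ex hex
end

section
/- Let j = exp(2πi/3) be a primitive cube root of unity and let H₀ be the 6×6 complex matrix [[1,1,1,1,1,1],[1,1,j,j,j²,j²],[1,j,1,j²,j²,j],[1,j,j²,1,j,j²],[1,j²,j²,j,1,j],[1,j²,j,j²,j,1]]. Then H₀ is not a master matrix: there exist no complex numbers λ_1,…,λ_6 and natural numbers n_1,…,n_6 such that (H₀)_{ik} = λ_i^{n_k} for all i, k ∈ {1,…,6}. -/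
/-!
The rows and columns with indices `1, 2` of `H₀` form the minor `[[1, j], [j, 1]]`, so a master
matrix structure would give `x ^ a = 1`, `x ^ b = j`, `y ^ a = j`, `y ^ b = 1`. Then
`j ^ a = (x ^ a) ^ b = 1` and likewise `j ^ b = 1`, so the order of `j` divides `a` and `b`, and
`x ^ ord j`, `y ^ ord j` satisfy the same equations with smaller exponents: infinite descent.
-/

theorem false_of_pow_eq_one_of_pow_eq {M : Type*} [Monoid M] {ζ : M} (hζ : ζ ≠ 1)
    (x y : M) (a b : ℕ) (hxa : x ^ a = 1) (hxb : x ^ b = ζ) (hya : y ^ a = ζ) (hyb : y ^ b = 1) :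
    False := by
  induction b using Nat.strong_induction_on generalizing a x y with
  | _ b ih =>
    have hζa : ζ ^ a = 1 := by rw [← hxb, ← pow_mul, mul_comm, pow_mul, hxa, one_pow]
    have hζb : ζ ^ b = 1 := by rw [← hya, ← pow_mul, mul_comm, pow_mul, hyb, one_pow]
    obtain ⟨a', rfl⟩ := orderOf_dvd_of_pow_eq_one hζa
    obtain ⟨b', rfl⟩ := orderOf_dvd_of_pow_eq_one hζb
    have hb : orderOf ζ * b' ≠ 0 := by
      rintro h
      rw [h, pow_zero] at hxb
      exact hζ hxb.symm
    have hord : 1 < orderOf ζ := by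
      have := left_ne_zero_of_mul hb
      have : orderOf ζ ≠ 1 := fun h ↦ hζ (orderOf_eq_one_iff.mp h)
      omega
    have hb' : b' < orderOf ζ * b' :=
      lt_mul_left (Nat.pos_of_ne_zero (right_ne_zero_of_mul hb)) hord
    simp only [pow_mul] at hxa hxb hya hyb
    exact ih b' hb' _ _ a' hxa hxb hya hyb

/-- the `6×6` complex Hadamard matrix `H₀` built from a primitive
cube root of unity `j = exp(2πi/3)` is not a master matrix: there are no complex
numbers `λ_1, …, λ_6` and natural numbers `n_1, …, n_6` with `(H₀)_{ik} = λ_i^(n_k)`. -/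
theorem H0_not_master_matrix (j : ℂ) (hj : j = Complex.exp (2 * Real.pi * Complex.I / 3))
    (H₀ : Matrix (Fin 6) (Fin 6) ℂ)
    (hH₀ : H₀ = !![1, 1,     1,     1,     1,     1;
                   1, 1,     j,     j,     j ^ 2, j ^ 2;
                   1, j,     1,     j ^ 2, j ^ 2, j;
                   1, j,     j ^ 2, 1,     j,     j ^ 2;
                   1, j ^ 2, j ^ 2, j,     1,     j;
                   1, j ^ 2, j,     j ^ 2, j,     1]) :
    ¬ ∃ (lam : Fin 6 → ℂ) (e : Fin 6 → ℕ),
        ∀ i k : Fin 6, H₀ i k = lam i ^ (e k) := by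
  have hj1 : j ≠ 1 := hj ▸ (Complex.isPrimitiveRoot_exp 3 (by norm_num)).ne_one (by norm_num)
  rintro ⟨lam, e, h⟩
  subst hH₀
  exact false_of_pow_eq_one_of_pow_eq hj1 (lam 1) (lam 2) (e 1) (e 2)
    (h 1 1).symm (h 1 2).symm (h 2 1).symm (h 2 2).symm
end

section
/- Let n ≥ 1, let M be an invertible n×n complex matrix, let n_1,…,n_n be integers, let v, w ∈ ℂⁿ, and set α = Σ_{a=1}^{n} v_a·w_a. Then the n²×n² matrix T = Σ_{a,b=1}^{n} v_a·w_b·(E_{ab} ⊗ M^{n_a−n_b}) satisfies T² = α·T. -/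
/-!
The blocks `X a b = E_{ab} ⊗ M^(n_a - n_b)` multiply like the matrix units themselves,
`X a b * X c d = δ_{bc} X a d`, because `M^(n_a - n_b) M^(n_b - n_d) = M^(n_a - n_d)`.
For any such system of matrix units, in the expansion of `T²` only the products
`X a b * X b d` survive, and summing over the middle index produces the factor `α`.
-/

open Matrix Kronecker

theorem sum_smul_mul_self_of_mul_eq_ite {R A ι : Type*} [CommSemiring R] [Semiring A]
    [Algebra R A] [Fintype ι] [DecidableEq ι] (X : ι → ι → A)
    (hX : ∀ a b c d, X a b * X c d = if b = c then X a d else 0) (v w : ι → R) :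
    (∑ a, ∑ b, (v a * w b) • X a b) * (∑ a, ∑ b, (v a * w b) • X a b) =
      (∑ c, v c * w c) • ∑ a, ∑ b, (v a * w b) • X a b := by
  have hterm : ∀ a b c d, ((v a * w b) • X a b) * ((v c * w d) • X c d) =
      if b = c then (v c * w c) • (v a * w d) • X a d else 0 := by
    intro a b c d
    rw [smul_mul_smul_comm, hX]
    split_ifs with h
    · subst h
      rw [smul_smul]
      congr 1
      ring
    · rw [smul_zero]
  calc _ = ∑ c, ∑ d, ∑ a, (v c * w c) • (v a * w d) • X a d := by
        simp only [Finset.sum_mul, Finset.mul_sum, hterm, Finset.sum_ite_eq', Finset.mem_univ,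
          if_true]
    _ = _ := by
        rw [Finset.sum_smul]
        simp only [Finset.smul_sum]
        exact Finset.sum_congr rfl fun _ _ => Finset.sum_comm

theorem single_kronecker_zpow_mul_single_kronecker_zpow {ι m R : Type*} [Fintype ι]
    [DecidableEq ι] [Fintype m] [DecidableEq m] [CommRing R] {M : Matrix m m R}
    (hM : IsUnit M) (e : ι → ℤ) (a b c d : ι) :
    (single a b (1 : R) ⊗ₖ (M ^ (e a - e b))) * (single c d (1 : R) ⊗ₖ (M ^ (e c - e d))) =
      if b = c then single a d (1 : R) ⊗ₖ (M ^ (e a - e d)) else 0 := by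
  rw [← mul_kronecker_mul]
  split_ifs with h
  · subst h
    rw [single_mul_single_same, one_mul,
      ← zpow_add ((isUnit_iff_isUnit_det M).mp hM), sub_add_sub_cancel]
  · rw [single_mul_single_of_ne (h := h), zero_kronecker]

theorem generalized_ansatz_idempotent_general (n : ℕ)
    (M : Matrix (Fin n) (Fin n) ℂ) (hM : IsUnit M)
    (e : Fin n → ℤ) (v w : Fin n → ℂ)
    (α : ℂ) (hα : α = ∑ a : Fin n, v a * w a)
    (T : Matrix (Fin n × Fin n) (Fin n × Fin n) ℂ)
    (hT : T = ∑ a : Fin n, ∑ b : Fin n,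
      (v a * w b) • ((Matrix.single a b (1 : ℂ)) ⊗ₖ (M ^ (e a - e b)))) :
    T * T = α • T := by
  subst hT hα
  exact sum_smul_mul_self_of_mul_eq_ite _
    (single_kronecker_zpow_mul_single_kronecker_zpow hM e) v w

/-- for `n ≥ 1`, an invertible `n×n` complex matrix `M`, integers
`n_1, …, n_n` and vectors `v, w ∈ ℂⁿ` with `α = Σ_a v_a w_a`, the generalized
Ansatz matrix `T = Σ_{a,b} v_a w_b (E_{ab} ⊗ M^(n_a - n_b))` satisfies `T² = α T`. -/
theorem generalized_ansatz_idempotent (n : ℕ) (hn : 1 ≤ n)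
    (M : Matrix (Fin n) (Fin n) ℂ) (hM : IsUnit M)
    (e : Fin n → ℤ) (v w : Fin n → ℂ)
    (α : ℂ) (hα : α = ∑ a : Fin n, v a * w a)
    (T : Matrix (Fin n × Fin n) (Fin n × Fin n) ℂ)
    (hT : T = ∑ a : Fin n, ∑ b : Fin n,
      (v a * w b) • ((Matrix.single a b (1 : ℂ)) ⊗ₖ (M ^ (e a - e b)))) :
    T * T = α • T :=
  generalized_ansatz_idempotent_general n M hM e v w α hα T hT
end

section
/- Let n ≥ 1, let M be an invertible n×n complex matrix, let n_1,…,n_n be integers, and let v, w ∈ ℂⁿ satisfy v_a·w_a = 1 for every a ∈ {1,…,n} (in particular every v_a is nonzero). Let g be the invertible diagonal matrix with g_{aa} = 1/v_a and set M̃ = g·M·g^{−1}. Then the generalized Ansatz matrix T = Σ_{a,b=1}^{n} v_a·w_b·(E_{ab} ⊗ M^{n_a−n_b}) is gauge equivalent to the pure-power form: (g ⊗ g)·T·(g ⊗ g)^{−1} = Σ_{a,b=1}^{n} E_{ab} ⊗ M̃^{n_a−n_b}. -/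
/-! Conjugation by `g ⊗ g` acts factorwise on each term `E_ab ⊗ M^k`. On the second factor it
turns `M^k` into `M̃^k` (for negative `k` as well, since the nonsingular inverse reverses products
unconditionally). On the first factor the diagonal `g` rescales `E_ab` by `v_b / v_a`, which
cancels the weight `v_a w_b` because `v_b w_b = 1`. -/

open Matrix Kronecker

namespace Matrix

variable {m α : Type*} [Fintype m] [DecidableEq m]

theorem mul_pow_mul_nonsing_inv [CommRing α] {g : Matrix m m α} (hg : IsUnit g.det)
    (A : Matrix m m α) (k : ℕ) : g * A ^ k * g⁻¹ = (g * A * g⁻¹) ^ k :=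
  (Units.conj_pow (nonsingInvUnit g hg) A k).symm

theorem mul_zpow_mul_nonsing_inv [CommRing α] {g : Matrix m m α} (hg : IsUnit g.det)
    (A : Matrix m m α) : ∀ k : ℤ, g * A ^ k * g⁻¹ = (g * A * g⁻¹) ^ k
  | (k : ℕ) => by simpa only [zpow_natCast] using mul_pow_mul_nonsing_inv hg A k
  | .negSucc k => by
    rw [zpow_negSucc, zpow_negSucc, ← mul_pow_mul_nonsing_inv hg, mul_inv_rev, mul_inv_rev,
      nonsing_inv_nonsing_inv g hg, mul_assoc]

theorem diagonal_mul_single_mul_diagonal [Semiring α] (d d' : m → α) (i j : m) (c : α) :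
    diagonal d * single i j c * diagonal d' = single i j (d i * c * d' j) := by
  ext k l
  simp only [mul_diagonal, diagonal_mul, single_apply]
  split_ifs with h
  · rw [h.1, h.2]
  · simp

theorem kronecker_mul_kronecker_mul_nonsing_inv {n : Type*} [Fintype n] [DecidableEq n]
    [CommRing α] (g A : Matrix m m α) (h B : Matrix n n α) :
    (g ⊗ₖ h) * (A ⊗ₖ B) * (g ⊗ₖ h)⁻¹ = (g * A * g⁻¹) ⊗ₖ (h * B * h⁻¹) := by
  rw [inv_kronecker, ← mul_kronecker_mul, ← mul_kronecker_mul]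

end Matrix

theorem generalized_ansatz_gauge_equivalent_general (n : ℕ)
    (M : Matrix (Fin n) (Fin n) ℂ)
    (e : Fin n → ℤ) (v w : Fin n → ℂ)
    (hvw : ∀ a, v a * w a = 1)
    (g : Matrix (Fin n) (Fin n) ℂ)
    (hg : g = Matrix.diagonal fun a => (v a)⁻¹)
    (Mt : Matrix (Fin n) (Fin n) ℂ) (hMt : Mt = g * M * g⁻¹)
    (T : Matrix (Fin n × Fin n) (Fin n × Fin n) ℂ)
    (hT : T = ∑ a : Fin n, ∑ b : Fin n,
      (v a * w b) • ((Matrix.single a b (1 : ℂ)) ⊗ₖ (M ^ (e a - e b)))) :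
    (g ⊗ₖ g) * T * (g ⊗ₖ g)⁻¹ =
      ∑ a : Fin n, ∑ b : Fin n,
        (Matrix.single a b (1 : ℂ)) ⊗ₖ (Mt ^ (e a - e b)) := by
  have hv : ∀ a, v a ≠ 0 := fun a h => by simpa [h] using hvw a
  have hg_mul : g * diagonal v = 1 := by
    rw [hg, diagonal_mul_diagonal, ← diagonal_one]
    exact congrArg diagonal (funext fun a => inv_mul_cancel₀ (hv a))
  have hg_inv : g⁻¹ = diagonal v := inv_eq_right_inv hg_mul
  have hg_det : IsUnit g.det := isUnit_det_of_right_inverse hg_mul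
  simp only [hT, Finset.mul_sum, Finset.sum_mul]
  refine Finset.sum_congr rfl fun a _ => Finset.sum_congr rfl fun b _ => ?_
  rw [Matrix.mul_smul, Matrix.smul_mul, kronecker_mul_kronecker_mul_nonsing_inv,
    mul_zpow_mul_nonsing_inv hg_det, ← hMt]
  have hweight : v a * w b * ((v a)⁻¹ * 1 * v b) = 1 := by
    rw [mul_one, mul_mul_mul_comm, mul_inv_cancel₀ (hv a), mul_comm (w b), hvw b, one_mul]
  rw [hg_inv, hg, diagonal_mul_single_mul_diagonal, ← smul_kronecker, smul_single, smul_eq_mul,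
    hweight]

/-- if `v_a w_a = 1` for every `a`, the generalized Ansatz matrix
`T = Σ_{a,b} v_a w_b (E_{ab} ⊗ M^(n_a - n_b))` is gauge equivalent, via the
diagonal matrix `g = diag(1/v_a)`, to the pure-power form for `M̃ = g M g⁻¹`:
`(g ⊗ g) T (g ⊗ g)⁻¹ = Σ_{a,b} E_{ab} ⊗ M̃^(n_a - n_b)`. -/
theorem generalized_ansatz_gauge_equivalent (n : ℕ) (hn : 1 ≤ n)
    (M : Matrix (Fin n) (Fin n) ℂ) (hM : IsUnit M)
    (e : Fin n → ℤ) (v w : Fin n → ℂ)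
    (hvw : ∀ a, v a * w a = 1)
    (g : Matrix (Fin n) (Fin n) ℂ)
    (hg : g = Matrix.diagonal fun a => (v a)⁻¹)
    (Mt : Matrix (Fin n) (Fin n) ℂ) (hMt : Mt = g * M * g⁻¹)
    (T : Matrix (Fin n × Fin n) (Fin n × Fin n) ℂ)
    (hT : T = ∑ a : Fin n, ∑ b : Fin n,
      (v a * w b) • ((Matrix.single a b (1 : ℂ)) ⊗ₖ (M ^ (e a - e b)))) :
    (g ⊗ₖ g) * T * (g ⊗ₖ g)⁻¹ =
      ∑ a : Fin n, ∑ b : Fin n,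
        (Matrix.single a b (1 : ℂ)) ⊗ₖ (Mt ^ (e a - e b)) :=
  generalized_ansatz_gauge_equivalent_general n M e v w hvw g hg Mt hMt T hT
end

section
/- Baxterization of Hecke representations: let q ∈ ℂ with q ≠ 0, let n ≥ 1, and let Ř be an invertible n²×n² complex matrix such that (i) the braid relation (Ř ⊗ I_n)(I_n ⊗ Ř)(Ř ⊗ I_n) = (I_n ⊗ Ř)(Ř ⊗ I_n)(I_n ⊗ Ř) holds on ℂⁿ⊗ℂⁿ⊗ℂⁿ, and (ii) the Hecke condition (Ř − q·I)(Ř + q^{−1}·I) = 0 holds. For nonzero u ∈ ℂ define Ř(u) = u·Ř − u^{−1}·Ř^{−1}, and set Ř₁₂(x) = Ř(x) ⊗ I_n, Ř₂₃(x) = I_n ⊗ Ř(x). Then for all nonzero u, w ∈ ℂ: Ř₁₂(u)·Ř₂₃(uw)·Ř₁₂(w) = Ř₂₃(w)·Ř₁₂(uw)·Ř₂₃(u). -/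
/-! With `λ = q - q⁻¹` the Hecke condition says `Ř² = λ Ř + 1`, so `Ř⁻¹ = Ř - λ` and `Ř(u)` is the
affine pencil `(u - u⁻¹) Ř + u⁻¹ λ` in `Ř`. Both lifts `X ↦ X ⊗ 1` and `X ↦ 1 ⊗ X` are
algebra homomorphisms, so the lifted generators `a = Ř₁₂`, `b = Ř₂₃` satisfy the braid relation
and the same quadratic relation. Expanding both sides of the Yang–Baxter equation and reducing
with `aba = bab`, `a² = λa + 1`, `b² = λb + 1` leaves an identity between rational functions
of `u` and `w`. -/

open Matrix Kronecker

section Hecke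

variable {K A B : Type*} [Field K] [Ring A] [Algebra K A] [Ring B] [Algebra K B]

theorem mul_self_eq_of_hecke {q : K} (hq : q ≠ 0) {a : A}
    (h : (a - q • 1) * (a + q⁻¹ • 1) = 0) : a * a = (q - q⁻¹) • a + 1 := by
  rw [← sub_eq_zero, ← h]
  simp only [sub_mul, mul_add, smul_mul_assoc, mul_smul_comm, mul_one, one_mul]
  match_scalars <;> field_simp
  ring

theorem mul_sub_eq_one_of_mul_self_eq {c : K} {a : A} (ha : a * a = c • a + 1) :
    a * (a - c • 1) = 1 := by
  rw [mul_sub, ha, mul_smul_one]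
  abel

/-- When `a * a = c • a + 1`, so that `a⁻¹ = a - c • 1`, this is `u • a - u⁻¹ • a⁻¹`. -/
def baxterize (c : K) (a : A) (u : K) : A := (u - u⁻¹) • a + (u⁻¹ * c) • 1

theorem AlgHom.map_baxterize (f : A →ₐ[K] B) (c : K) (a : A) (u : K) :
    f (baxterize c a u) = baxterize c (f a) u := by
  simp [baxterize]

theorem baxterize_yangBaxter {c : K} {a b : A} (hab : a * b * a = b * a * b)
    (ha : a * a = c • a + 1) (hb : b * b = c • b + 1) {u w : K} (hu : u ≠ 0) (hw : w ≠ 0) :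
    baxterize c a u * baxterize c b (u * w) * baxterize c a w =
      baxterize c b w * baxterize c a (u * w) * baxterize c b u := by
  simp only [baxterize, add_mul, mul_add, smul_mul_assoc, mul_smul_comm, one_mul, mul_one,
    hab, ha, hb]
  match_scalars <;> field_simp <;> ring

end Hecke

namespace Matrix

variable (R : Type*) {m n : Type*} [CommSemiring R] [Fintype m] [DecidableEq m]
  [Fintype n] [DecidableEq n]

def kroneckerOneLeftAlgHom : Matrix m m R →ₐ[R] Matrix (n × m) (n × m) R where
  toFun X := 1 ⊗ₖ X
  map_one' := one_kronecker_one
  map_mul' X Y := by rw [← mul_kronecker_mul, one_mul]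
  map_zero' := kronecker_zero _
  map_add' := kronecker_add _
  commutes' r := by simp [Algebra.algebraMap_eq_smul_one, kronecker_smul]

def kroneckerOneRightAlgHom : Matrix m m R →ₐ[R] Matrix (m × n) (m × n) R where
  toFun X := X ⊗ₖ 1
  map_one' := one_kronecker_one
  map_mul' X Y := by rw [← mul_kronecker_mul, one_mul]
  map_zero' := zero_kronecker _
  map_add' X Y := add_kronecker X Y _
  commutes' r := by simp [Algebra.algebraMap_eq_smul_one, smul_kronecker]

end Matrix

theorem baxterization_hecke_general (n : ℕ) (q : ℂ) (hq : q ≠ 0)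
    (R : Matrix (Fin n × Fin n) (Fin n × Fin n) ℂ)
    (lift12 lift23 : Matrix (Fin n × Fin n) (Fin n × Fin n) ℂ →
      Matrix (Fin n × Fin n × Fin n) (Fin n × Fin n × Fin n) ℂ)
    (hlift12 : ∀ X, lift12 X = Matrix.reindex (Equiv.prodAssoc (Fin n) (Fin n) (Fin n))
      (Equiv.prodAssoc (Fin n) (Fin n) (Fin n)) (X ⊗ₖ (1 : Matrix (Fin n) (Fin n) ℂ)))
    (hlift23 : ∀ X, lift23 X = (1 : Matrix (Fin n) (Fin n) ℂ) ⊗ₖ X)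
    (hbraid : lift12 R * lift23 R * lift12 R = lift23 R * lift12 R * lift23 R)
    (hHecke : (R - q • (1 : Matrix (Fin n × Fin n) (Fin n × Fin n) ℂ)) *
      (R + q⁻¹ • (1 : Matrix (Fin n × Fin n) (Fin n × Fin n) ℂ)) = 0)
    (Rx : ℂ → Matrix (Fin n × Fin n) (Fin n × Fin n) ℂ)
    (hRx : ∀ u : ℂ, Rx u = u • R - u⁻¹ • R⁻¹) :
    ∀ u w : ℂ, u ≠ 0 → w ≠ 0 →
      lift12 (Rx u) * lift23 (Rx (u * w)) * lift12 (Rx w) =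
        lift23 (Rx w) * lift12 (Rx (u * w)) * lift23 (Rx u) := by
  intro u w hu hw
  have hRR := mul_self_eq_of_hecke hq hHecke
  have hRx_eq : ∀ v, Rx v = baxterize (q - q⁻¹) R v := fun v => by
    rw [hRx, inv_eq_right_inv (mul_sub_eq_one_of_mul_self_eq hRR), baxterize]
    module
  obtain ⟨f, rfl⟩ : ∃ f : Matrix (Fin n × Fin n) (Fin n × Fin n) ℂ →ₐ[ℂ] _, lift12 = f :=
    ⟨(reindexAlgEquiv ℂ ℂ (Equiv.prodAssoc _ _ _)).toAlgHom.comp (kroneckerOneRightAlgHom ℂ),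
      funext hlift12⟩
  obtain ⟨g, rfl⟩ : ∃ g : Matrix (Fin n × Fin n) (Fin n × Fin n) ℂ →ₐ[ℂ] _, lift23 = g :=
    ⟨kroneckerOneLeftAlgHom ℂ, funext hlift23⟩
  simp only [hRx_eq, AlgHom.map_baxterize]
  exact baxterize_yangBaxter hbraid (by simpa using congrArg f hRR)
    (by simpa using congrArg g hRR) hu hw

/-- Baxterization of Hecke representations. If the invertible
`n²×n²` matrix `Ř` satisfies the braid relation and the Hecke condition
`(Ř − q·I)(Ř + q⁻¹·I) = 0`, then `Ř(u) = u Ř − u⁻¹ Ř⁻¹` satisfies the Yang–Baxter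
equation with multiplicative spectral parameters:
`Ř₁₂(u) Ř₂₃(uw) Ř₁₂(w) = Ř₂₃(w) Ř₁₂(uw) Ř₂₃(u)` for all nonzero `u, w`. -/
theorem baxterization_hecke (n : ℕ) (hn : 1 ≤ n) (q : ℂ) (hq : q ≠ 0)
    (R : Matrix (Fin n × Fin n) (Fin n × Fin n) ℂ) (hR : IsUnit R)
    (lift12 lift23 : Matrix (Fin n × Fin n) (Fin n × Fin n) ℂ →
      Matrix (Fin n × Fin n × Fin n) (Fin n × Fin n × Fin n) ℂ)
    (hlift12 : ∀ X, lift12 X = Matrix.reindex (Equiv.prodAssoc (Fin n) (Fin n) (Fin n))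
      (Equiv.prodAssoc (Fin n) (Fin n) (Fin n)) (X ⊗ₖ (1 : Matrix (Fin n) (Fin n) ℂ)))
    (hlift23 : ∀ X, lift23 X = (1 : Matrix (Fin n) (Fin n) ℂ) ⊗ₖ X)
    (hbraid : lift12 R * lift23 R * lift12 R = lift23 R * lift12 R * lift23 R)
    (hHecke : (R - q • (1 : Matrix (Fin n × Fin n) (Fin n × Fin n) ℂ)) *
      (R + q⁻¹ • (1 : Matrix (Fin n × Fin n) (Fin n × Fin n) ℂ)) = 0)
    (Rx : ℂ → Matrix (Fin n × Fin n) (Fin n × Fin n) ℂ)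
    (hRx : ∀ u : ℂ, Rx u = u • R - u⁻¹ • R⁻¹) :
    ∀ u w : ℂ, u ≠ 0 → w ≠ 0 →
      lift12 (Rx u) * lift23 (Rx (u * w)) * lift12 (Rx w) =
        lift23 (Rx w) * lift12 (Rx (u * w)) * lift23 (Rx u) :=
  baxterization_hecke_general n q hq R lift12 lift23 hlift12 hlift23 hbraid hHecke Rx hRx
end
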